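/- arXiv:1004.2305 — 6 statements merged into one kernel-verified Lean document; each statement's English description precedes it below -/
import Mathlib

section
/- For every integer n ≥ 2, the sum ∑ C_{r_1}·C_{r_2}·C_{r_3} over all triples (r_1,r_2,r_3) of integers with r_1, r_2, r_3 ≥ 1 and r_1 + r_2 + r_3 = n − 1 equals C_{n+1} − 4·C_n + 3·C_{n−1}. -/
/-!
The sum is the coefficient of `X ^ (n - 1)` in `(C - 1) ^ 3`, where `C = ∑ catalan k • X ^ k`:
the factor `C - 1` has the coefficients of `C` except a vanishing constant term, which accounts
for the constraint `rᵢ ≥ 1`. The functional equation `C = 1 + X * C ^ 2` reduces `X ^ 2 * (C - 1) ^ 3`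
to `C - 1 - X - 4 X (C - 1) + 3 X ^ 2 C - X ^ 2`, whose coefficients are read off directly.
-/

open Finset PowerSeries

theorem Finset.Nat.sum_antidiagonalTuple_succ {M : Type*} [AddCommMonoid M] (k n : ℕ)
    (f : (Fin (k + 1) → ℕ) → M) :
    ∑ x ∈ Nat.antidiagonalTuple (k + 1) n, f x =
      ∑ p ∈ antidiagonal n, ∑ x ∈ Nat.antidiagonalTuple k p.2, f (Fin.cons p.1 x) := by
  rw [sum_sigma']
  refine sum_nbij' (fun x => ⟨(x 0, ∑ i, Fin.tail x i), Fin.tail x⟩)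
    (fun x => Fin.cons x.1.1 x.2) ?_ ?_ ?_ ?_ ?_
  · intro x hx
    simp_all [Nat.mem_antidiagonalTuple, Fin.sum_univ_succ, Fin.tail]
  · rintro ⟨⟨a, b⟩, x⟩ hx
    simp_all [Nat.mem_antidiagonalTuple, Fin.sum_univ_succ]
  · intro x _
    simp
  · rintro ⟨⟨a, b⟩, x⟩ hx
    simp_all [Nat.mem_antidiagonalTuple]
  · intro x _
    simp

theorem PowerSeries.coeff_pow_eq_sum_antidiagonalTuple {R : Type*} [CommSemiring R]
    (φ : R⟦X⟧) (k n : ℕ) :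
    coeff n (φ ^ k) = ∑ x ∈ Nat.antidiagonalTuple k n, ∏ i, coeff (x i) φ := by
  induction k generalizing n with
  | zero => cases n <;> simp [coeff_one]
  | succ k ih =>
    simp [pow_succ', coeff_mul, ih, Nat.sum_antidiagonalTuple_succ, Fin.prod_univ_succ, mul_sum]

section Catalan

variable {R : Type*} [CommRing R]

theorem PowerSeries.X_sq_mul_sub_one_pow_three_of_sq_mul_X_add_one {C : R⟦X⟧}
    (hC : C ^ 2 * X + 1 = C) :
    X ^ 2 * (C - 1) ^ 3 = C - 1 - X - 4 * X * (C - 1) + 3 * X ^ 2 * C - X ^ 2 := by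
  linear_combination (X * C - 3 * X + 1) * hC

theorem PowerSeries.map_catalanSeries_sq_mul_X_add_one :
    (catalanSeries.map (Nat.castRingHom R)) ^ 2 * X + 1 =
      catalanSeries.map (Nat.castRingHom R) := by
  simpa using congrArg (map (Nat.castRingHom R)) catalanSeries_sq_mul_X_add_one

theorem PowerSeries.coeff_map_catalanSeries_sub_one (n : ℕ) :
    coeff n (catalanSeries.map (Nat.castRingHom R) - 1) =
      if 1 ≤ n then (catalan n : R) else 0 := by
  cases n <;> simp [coeff_one, coeff_map, -coeff_zero_eq_constantCoeff]

theorem PowerSeries.coeff_succ_map_catalanSeries_sub_one_pow_three (m : ℕ) :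
    coeff (m + 1) ((catalanSeries.map (Nat.castRingHom R) - 1) ^ 3) =
      (catalan (m + 3) : R) - 4 * catalan (m + 2) + 3 * catalan (m + 1) := by
  have h := congrArg (coeff (m + 1 + 2))
    (X_sq_mul_sub_one_pow_three_of_sq_mul_X_add_one (map_catalanSeries_sq_mul_X_add_one (R := R)))
  rw [coeff_X_pow_mul, ← map_ofNat C 4, ← map_ofNat C 3] at h
  simp only [h, map_sub, map_add, mul_assoc, coeff_C_mul, coeff_succ_X_mul, coeff_X_pow_mul',
    coeff_map, catalanSeries_coeff, coeff_X, coeff_X_pow, coeff_one]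
  simp

theorem sum_antidiagonalTuple_pos_prod_catalan_eq_coeff (k n : ℕ) :
    ∑ r ∈ (Nat.antidiagonalTuple k n).filter (fun r => ∀ i, 1 ≤ r i), ∏ i, (catalan (r i) : R) =
      coeff n ((catalanSeries.map (Nat.castRingHom R) - 1) ^ k) := by
  simp only [coeff_pow_eq_sum_antidiagonalTuple, coeff_map_catalanSeries_sub_one, prod_ite_zero,
    mem_univ, true_imp_iff, sum_filter]

end Catalan

/-- For every n ≥ 2, ∑_{r₁+r₂+r₃=n−1, rᵢ≥1} C_{r₁}C_{r₂}C_{r₃}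
= C_{n+1} − 4·C_n + 3·C_{n−1}. -/
theorem stmt_5 (n : ℕ) (hn : 2 ≤ n) :
    (∑ r ∈ (Finset.Nat.antidiagonalTuple 3 (n - 1)).filter (fun r => ∀ i, 1 ≤ r i),
        ∏ i, (catalan (r i) : ℤ)) =
      (catalan (n + 1) : ℤ) - 4 * catalan n + 3 * catalan (n - 1) := by
  obtain ⟨m, rfl⟩ : ∃ m, n = m + 2 := ⟨n - 2, by omega⟩
  rw [sum_antidiagonalTuple_pos_prod_catalan_eq_coeff, show m + 2 - 1 = m + 1 by omega,
    coeff_succ_map_catalanSeries_sub_one_pow_three]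
end

section
/- Let the vectors a^{(m)} be defined by a^{(1)} = (1) and a^{(m+1)} = A_{m+1}·(a^{(m)},0)ᵀ. Then for every m ≥ 2 and every i with 1 ≤ i ≤ m−1, one has ∑_{j=1}^{m} C_{m+i−j}·a_j^{(m)} = 0. -/
/-- The m×m lower-triangular matrix A_m with entries 1 on the diagonal, −2·C₀ on the
subdiagonal, and −C_{i−j−1} for i > j+1 (indices in the paper are 1-based). -/
def Amat (k : ℕ) : Matrix (Fin k) (Fin k) ℤ := fun i j =>
  if (i : ℕ) = (j : ℕ) then 1
  else if (i : ℕ) = (j : ℕ) + 1 then -(2 * catalan 0)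
  else if (j : ℕ) + 1 < (i : ℕ) then -(catalan ((i : ℕ) - (j : ℕ) - 1) : ℤ)
  else 0

/-- The vectors a⁽ᵐ⁾: here `aVec m : Fin (m+1) → ℤ` is a⁽ᵐ⁺¹⁾ of the paper, i.e.
a⁽¹⁾ = (1) and a⁽ᵐ⁺¹⁾ = A_{m+1}·(a⁽ᵐ⁾,0)ᵀ. -/
def aVec : (m : ℕ) → Fin (m + 1) → ℤ
  | 0 => fun _ => 1
  | m + 1 => (Amat (m + 2)).mulVec (Fin.snoc (aVec m) 0)

/-
Write `μ_p(x) = ∑_j C_{p-j} x_j`. Weighting the `k`-th column of `A_{m+2}` by `C_{m+2+q-j}` gives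
`C_{p} - 2 C_{p-1} - ∑_t C_{t+1} C_{p-2-t}` with `p = m+2+q-k`; by Segner's recurrence this is the
tail `∑_{e<q} C_{q-e} C_{m+1+e-k}` of the convolution for `C_p`. Hence
`μ_{m+2+q}(A_{m+2} (x, 0)) = ∑_{e<q} C_{q-e} μ_{m+1+e}(x)`, and induction on the length of
`a⁽ᵐ⁾` kills all the moments in the range of the theorem.
-/

open Finset Matrix

/-- Segner's recurrence `catalan_succ`, split at the indices `1`, `r + 1` and `r + q + 1`. -/
lemma catalan_add_add_two (r q : ℕ) :
    catalan (r + q + 2) = 2 * catalan (r + q + 1)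
      + ∑ t ∈ range r, catalan (t + 1) * catalan (r + q - t)
      + ∑ e ∈ range q, catalan (q - e) * catalan (r + 1 + e) := by
  rw [catalan_succ, Fin.sum_univ_eq_sum_range (fun d => catalan d * catalan (r + q + 1 - d)),
    Nat.succ_eq_add_one, show r + q + 1 + 1 = (r + 1) + (q + 1) by ring, sum_range_add,
    sum_range_succ', sum_range_succ]
  have hfirst : ∀ t ∈ range r, catalan (t + 1) * catalan (r + q + 1 - (t + 1))
      = catalan (t + 1) * catalan (r + q - t) := fun t _ => by congr 2; omega
  have hmiddle : ∀ e ∈ range q, catalan (r + 1 + e) * catalan (r + q + 1 - (r + 1 + e))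
      = catalan (q - e) * catalan (r + 1 + e) := fun e _ => by
    rw [mul_comm]; congr 2; omega
  rw [sum_congr rfl hfirst, sum_congr rfl hmiddle,
    show r + q + 1 - (r + 1 + q) = 0 by omega, Nat.sub_zero, show r + 1 + q = r + q + 1 by ring]
  simp only [catalan_zero]
  ring

def amatEntry (i j : ℕ) : ℤ :=
  if i = j then 1
  else if i = j + 1 then -(2 * catalan 0)
  else if j + 1 < i then -(catalan (i - j - 1) : ℤ)
  else 0

lemma amat_apply {k : ℕ} (i j : Fin k) : Amat k i j = amatEntry i j := rfl

lemma sum_catalan_mul_amatEntry (m q k : ℕ) (hk : k ≤ m) :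
    ∑ j ∈ range (m + 2), (catalan (m + 2 + q - j) : ℤ) * amatEntry j k
      = ∑ e ∈ range q, (catalan (q - e) : ℤ) * catalan (m + 1 + e - k) := by
  obtain ⟨r, rfl⟩ := Nat.exists_eq_add_of_le hk
  rw [show k + r + 2 = k + (r + 2) by ring]
  have habove : ∀ j ∈ range k, (catalan (k + (r + 2) + q - j) : ℤ) * amatEntry j k = 0 :=
    fun j hj => by
      simp only [mem_range] at hj
      simp only [amatEntry, if_neg (show j ≠ k by omega), if_neg (show j ≠ k + 1 by omega),
        if_neg (show ¬ k + 1 < j by omega), mul_zero]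
  have hbelow : ∀ t ∈ range r, (catalan (k + (r + 2) + q - (k + (t + 1 + 1))) : ℤ)
      * amatEntry (k + (t + 1 + 1)) k = -((catalan (t + 1) : ℤ) * catalan (r + q - t)) :=
    fun t _ => by
      rw [amatEntry, if_neg (by omega), if_neg (by omega), if_pos (by omega),
        show k + (t + 1 + 1) - k - 1 = t + 1 by omega,
        show k + (r + 2) + q - (k + (t + 1 + 1)) = r + q - t by omega]
      ring
  have hsegner := congrArg (Nat.cast : ℕ → ℤ) (catalan_add_add_two r q)
  push_cast at hsegner
  rw [sum_range_add, sum_eq_zero habove,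
    sum_range_succ', sum_range_succ', sum_congr rfl hbelow, sum_neg_distrib]
  simp only [amatEntry, add_zero, if_pos, if_neg (show k + (0 + 1) ≠ k by omega), catalan_zero,
    Nat.cast_one]
  rw [show k + (r + 2) + q - k = r + q + 2 by omega,
    show k + (r + 2) + q - (k + (0 + 1)) = r + q + 1 by omega]
  have hmid : ∀ e ∈ range q, (catalan (q - e) : ℤ) * catalan (k + r + 1 + e - k)
      = (catalan (q - e) : ℤ) * catalan (r + 1 + e) := fun e _ => by congr 3; omega
  rw [sum_congr rfl hmid]
  linarith

def catalanMoment {n : ℕ} (x : Fin n → ℤ) (p : ℕ) : ℤ :=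
  ∑ j : Fin n, (catalan (p - j) : ℤ) * x j

lemma catalanMoment_amat_mulVec_snoc {m : ℕ} (x : Fin (m + 1) → ℤ) (q : ℕ) :
    catalanMoment (Amat (m + 2) *ᵥ Fin.snoc x 0) (m + 2 + q)
      = ∑ e ∈ range q, (catalan (q - e) : ℤ) * catalanMoment x (m + 1 + e) := by
  have hcolumn : ∀ k : Fin (m + 1),
      ∑ j : Fin (m + 2), (catalan (m + 2 + q - j) : ℤ) * Amat (m + 2) j k.castSucc
        = ∑ e ∈ range q, (catalan (q - e) : ℤ) * catalan (m + 1 + e - k) := fun k => by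
    simp only [amat_apply, Fin.val_castSucc]
    rw [Fin.sum_univ_eq_sum_range (fun j => (catalan (m + 2 + q - j) : ℤ) * amatEntry j k)]
    exact sum_catalan_mul_amatEntry m q k (Nat.lt_succ_iff.mp k.isLt)
  calc catalanMoment (Amat (m + 2) *ᵥ Fin.snoc x 0) (m + 2 + q)
      = ∑ k : Fin (m + 1),
          (∑ j : Fin (m + 2), (catalan (m + 2 + q - j) : ℤ) * Amat (m + 2) j k.castSucc) * x k := by
        rw [catalanMoment, ← dotProduct, dotProduct_mulVec, dotProduct, Fin.sum_univ_castSucc]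
        simp only [Fin.snoc_castSucc, Fin.snoc_last, mul_zero, add_zero, vecMul, dotProduct]
    _ = ∑ k : Fin (m + 1),
          (∑ e ∈ range q, (catalan (q - e) : ℤ) * catalan (m + 1 + e - k)) * x k := by
        simp only [hcolumn]
    _ = ∑ e ∈ range q, (catalan (q - e) : ℤ) * catalanMoment x (m + 1 + e) := by
        simp only [catalanMoment, sum_mul, mul_sum, mul_assoc]
        rw [sum_comm]

lemma catalanMoment_aVec_eq_zero (m i : ℕ) (hi1 : 1 ≤ i) (hi2 : i ≤ m) :
    catalanMoment (aVec m) (m + i) = 0 := by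
  induction m generalizing i with
  | zero => omega
  | succ m ih =>
    obtain ⟨q, rfl⟩ := Nat.exists_eq_add_of_le' hi1
    rw [aVec, show m + 1 + (q + 1) = m + 2 + q by ring, catalanMoment_amat_mulVec_snoc]
    refine sum_eq_zero fun e he => ?_
    rw [mem_range] at he
    rw [show m + 1 + e = m + (e + 1) by ring, ih (e + 1) (by omega) (by omega), mul_zero]

/-- For every m ≥ 2 (written `m+2`) and every i with 1 ≤ i ≤ m−1,
∑_{j=1}^{m} C_{m+i−j}·a_j⁽ᵐ⁾ = 0.  (The `j`-th coordinate below is a_{j+1} of the paper.) -/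
theorem stmt_7 (m i : ℕ) (hi1 : 1 ≤ i) (hi2 : i ≤ (m + 2) - 1) :
    ∑ j : Fin (m + 2), (catalan ((m + 2) + i - ((j : ℕ) + 1)) : ℤ) * aVec (m + 1) j = 0 := by
  have hindex : ∀ j : Fin (m + 2), (m + 2) + i - ((j : ℕ) + 1) = m + 1 + i - j := fun j => by
    omega
  simpa only [catalanMoment, hindex] using catalanMoment_aVec_eq_zero (m + 1) i hi1 (by omega)
end

section
/- For every integer n ≥ 2, the sum ∑ C_{r_1}·C_{r_2}·C_{r_3}·C_{r_4} over all quadruples (r_1,r_2,r_3,r_4) of nonnegative integers with r_1 ≥ 1, r_4 ≥ 1, r_2, r_3 ≥ 0 and r_1 + r_2 + r_3 + r_4 = n − 2 equals C_{n+1} − 4·C_n + 3·C_{n−1}. -/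
/-!
With `C = ∑ Cₙ Xⁿ` the Catalan generating function, the sum is the coefficient of
`X^(n-2)` in `(C - 1) · C · C · (C - 1)`: the factors `C - 1` enforce `r₁, r₄ ≥ 1`
because `C₀ = 1`. The functional equation `X C² = C - 1` reduces `X³ (C - 1)² C²` to
`(1 - 4X + 3X²) C - (1 - 3X + X²)`, whose coefficient of `X^(n+1)` is
`C_{n+1} - 4 Cₙ + 3 C_{n-1}`.
-/

open Finset

theorem pow_three_mul_sub_one_sq_mul_sq {R : Type*} [CommRing R] {x c : R}
    (h : c ^ 2 * x + 1 = c) :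
    x ^ 3 * ((c - 1) ^ 2 * c ^ 2)
      = c - 4 • (x * c) + 3 • (x ^ 2 * c) - (1 - 3 • x + x ^ 2) := by
  linear_combination (x ^ 2 * c ^ 2 - 2 * x ^ 2 * c + x ^ 2 + x * c - 3 * x + 1) * h

namespace PowerSeries

theorem coeff_prod_eq_sum_piAntidiag {R ι : Type*} [CommSemiring R] [DecidableEq ι]
    (f : ι → R⟦X⟧) (d : ℕ) (s : Finset ι) :
    coeff d (∏ j ∈ s, f j) = ∑ l ∈ piAntidiag s d, ∏ i ∈ s, coeff (l i) (f i) := by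
  rw [coeff_prod, finsuppAntidiag, sum_map]
  exact sum_attach (piAntidiag s d) fun l => ∏ i ∈ s, coeff (l i) (f i)

theorem coeff_prod_univ_fin_eq_sum_antidiagonalTuple {R : Type*} [CommSemiring R] {k : ℕ}
    (f : Fin k → R⟦X⟧) (d : ℕ) :
    coeff d (∏ i, f i) = ∑ l ∈ Nat.antidiagonalTuple k d, ∏ i, coeff (l i) (f i) := by
  rw [coeff_prod_eq_sum_piAntidiag, piAntidiag_univ_fin_eq_antidiagonalTuple]

noncomputable def intCatalanSeries : ℤ⟦X⟧ := catalanSeries.map (Nat.castRingHom ℤ)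

@[simp]
theorem coeff_intCatalanSeries (n : ℕ) : coeff n intCatalanSeries = catalan n := by
  simp [intCatalanSeries]

theorem intCatalanSeries_sq_mul_X_add_one : intCatalanSeries ^ 2 * X + 1 = intCatalanSeries := by
  have h := congrArg (map (Nat.castRingHom ℤ)) catalanSeries_sq_mul_X_add_one
  rwa [map_add, map_mul, map_pow, map_X, map_one] at h

theorem coeff_intCatalanSeries_sub_one (n : ℕ) :
    coeff n (intCatalanSeries - 1) = if 1 ≤ n then (catalan n : ℤ) else 0 := by
  rw [map_sub, coeff_intCatalanSeries, coeff_one]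
  rcases n with _ | n <;> simp

theorem coeff_intCatalanSeries_sub_one_sq_mul_sq (m : ℕ) :
    coeff m ((intCatalanSeries - 1) ^ 2 * intCatalanSeries ^ 2)
      = (catalan (m + 3) : ℤ) - 4 * catalan (m + 2) + 3 * catalan (m + 1) := by
  rw [← coeff_X_pow_mul _ 3,
    pow_three_mul_sub_one_sq_mul_sq intCatalanSeries_sq_mul_X_add_one]
  simp only [map_sub, map_add, map_nsmul, coeff_succ_X_mul, coeff_X_pow_mul', coeff_one, coeff_X,
    coeff_X_pow]
  simp

theorem sum_filter_antidiagonalTuple_four_prod_catalan (m : ℕ) :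
    ∑ r ∈ (Nat.antidiagonalTuple 4 m).filter (fun r => 1 ≤ r 0 ∧ 1 ≤ r 3),
        ∏ i, (catalan (r i) : ℤ)
      = coeff m ((intCatalanSeries - 1) ^ 2 * intCatalanSeries ^ 2) := by
  let f : Fin 4 → ℤ⟦X⟧ := ![intCatalanSeries - 1, intCatalanSeries, intCatalanSeries,
    intCatalanSeries - 1]
  have hf : (intCatalanSeries - 1) ^ 2 * intCatalanSeries ^ 2 = ∏ i, f i := by
    simp only [f, Fin.prod_univ_four, Matrix.cons_val_zero, Matrix.cons_val_one, Matrix.cons_val]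
    ring
  rw [hf, coeff_prod_univ_fin_eq_sum_antidiagonalTuple, sum_filter]
  refine sum_congr rfl fun r _ => ?_
  simp only [f, Fin.prod_univ_four, Matrix.cons_val_zero, Matrix.cons_val_one, Matrix.cons_val,
    coeff_intCatalanSeries_sub_one, coeff_intCatalanSeries]
  by_cases h0 : 1 ≤ r 0 <;> by_cases h3 : 1 ≤ r 3 <;> simp [h0, h3]

end PowerSeries

/-- For every n ≥ 2, ∑ C_{r₁}C_{r₂}C_{r₃}C_{r₄} over quadruples with
r₁ ≥ 1, r₄ ≥ 1, r₂, r₃ ≥ 0 and r₁+r₂+r₃+r₄ = n−2 equals C_{n+1} − 4·C_n + 3·C_{n−1}. -/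
theorem stmt_12 (n : ℕ) (hn : 2 ≤ n) :
    (∑ r ∈ (Finset.Nat.antidiagonalTuple 4 (n - 2)).filter (fun r => 1 ≤ r 0 ∧ 1 ≤ r 3),
        ∏ i, (catalan (r i) : ℤ)) =
      (catalan (n + 1) : ℤ) - 4 * catalan n + 3 * catalan (n - 1) := by
  obtain ⟨m, rfl⟩ := Nat.exists_eq_add_of_le' hn
  rw [PowerSeries.sum_filter_antidiagonalTuple_four_prod_catalan,
    PowerSeries.coeff_intCatalanSeries_sub_one_sq_mul_sq]
  simp
end

section
/- Define T(n,m) for m ≥ 2 as the sum ∑ C_{r_1}·…·C_{r_m} over all m-tuples (r_1,…,r_m) of nonnegative integers with r_1 ≥ 1, r_m ≥ 1 and r_1+⋯+r_m = n−m+2, and set T(n,1) := C_{n+1} − C_n. Then for every m ≥ 3 and every integer n > m, the recurrence T(n,m) = T(n,m−1) − T(n−1,m−2) holds. -/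
/-!
With `C = ∑ Cₙ xⁿ` one has `C - 1 = x C²`, so the weighted tuples with first and last entry
positive are counted by `[x^(n-m+2)] (C - 1)² C^(m-2) = [x^(n-m)] C^(m+2)`. The convention
`T(n,1) = C_{n+1} - C_n` fits the same formula, since `x² C³ = C - 1 - x C`. The recurrence is then
the coefficient of `x^(n-m+1)` in `C^(m+1) - C^m = x C^(m+2)`.
-/

/-- `T n m` (m ≥ 2) = ∑ C_{r₁}⋯C_{r_m} over m-tuples of nonnegative integers with
r₁ ≥ 1, r_m ≥ 1 and r₁+⋯+r_m = n−m+2. -/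
def Tcount (n m : ℕ) : ℕ :=
  ∑ r ∈ (Finset.Nat.antidiagonalTuple m (n - m + 2)).filter
      (fun r => ∀ i : Fin m, ((i : ℕ) = 0 ∨ (i : ℕ) = m - 1) → 1 ≤ r i),
    ∏ i, catalan (r i)

/-- `T n m` extended by the convention T(n,1) := C_{n+1} − C_n. -/
def Tz (n m : ℕ) : ℤ :=
  if m = 1 then (catalan (n + 1) : ℤ) - catalan n else (Tcount n m : ℤ)

open Finset Finset.Nat PowerSeries

theorem PowerSeries.coeff_prod_univ_fin {R : Type*} [CommSemiring R] {k : ℕ}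
    (f : Fin k → R⟦X⟧) (d : ℕ) :
    coeff d (∏ i, f i) = ∑ r ∈ antidiagonalTuple k d, ∏ i, coeff (r i) (f i) := by
  rw [coeff_prod, finsuppAntidiag, sum_map, ← piAntidiag_univ_fin_eq_antidiagonalTuple,
    ← sum_attach (piAntidiag univ d)]
  rfl

theorem PowerSeries.coeff_catalanSeries_sq_mul_X (n : ℕ) :
    coeff n (catalanSeries ^ 2 * X) = if n = 0 then 0 else catalan n := by
  rcases n with _ | n
  · simp
  · conv_rhs => rw [if_neg n.succ_ne_zero, ← catalanSeries_coeff, ← catalanSeries_sq_mul_X_add_one]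
    simp

theorem Tcount_eq_coeff_catalanSeries_pow {m : ℕ} (hm : 2 ≤ m) (n : ℕ) :
    Tcount n m = coeff (n - m) (catalanSeries ^ (m + 2)) := by
  obtain ⟨k, rfl⟩ : ∃ k, m = k + 2 := ⟨m - 2, by omega⟩
  -- `catalanSeries ^ 2 * X = catalanSeries - 1` generates the Catalan numbers with positive index
  let factor (i : Fin (k + 2)) : ℕ⟦X⟧ :=
    if (i : ℕ) = 0 ∨ (i : ℕ) = k + 2 - 1 then catalanSeries ^ 2 * X else catalanSeries
  have coeff_factor (i : Fin (k + 2)) (d : ℕ) : coeff d (factor i) =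
      if ((i : ℕ) = 0 ∨ (i : ℕ) = k + 2 - 1) → 1 ≤ d then catalan d else 0 := by
    by_cases hi : (i : ℕ) = 0 ∨ (i : ℕ) = k + 2 - 1
    · simp only [factor, if_pos hi, coeff_catalanSeries_sq_mul_X, hi, true_imp_iff,
        Nat.one_le_iff_ne_zero, ite_not]
    · simp only [factor, if_neg hi, hi, false_imp_iff, if_true, catalanSeries_coeff]
  have prod_factor : ∏ i, factor i = catalanSeries ^ (k + 2 + 2) * X ^ 2 := by
    have h_first : factor 0 = catalanSeries ^ 2 * X := if_pos (Or.inl rfl)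
    have h_last : factor (Fin.last k).succ = catalanSeries ^ 2 * X := if_pos (Or.inr (by simp))
    have h_inner (j : Fin k) : factor j.castSucc.succ = catalanSeries := if_neg (by simp; omega)
    rw [Fin.prod_univ_succ, Fin.prod_univ_castSucc, h_first, h_last]
    simp only [h_inner, prod_const, card_univ, Fintype.card_fin]
    ring
  rw [Tcount, sum_filter, ← coeff_mul_X_pow, ← prod_factor, coeff_prod_univ_fin]
  simp_rw [coeff_factor, Fintype.prod_ite_zero]
  congr!

theorem PowerSeries.catalanSeries_pow_three_mul_X_sq_add :
    catalanSeries ^ 3 * X ^ 2 + catalanSeries * X + 1 = catalanSeries := by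
  have h := catalanSeries_sq_mul_X_add_one
  calc catalanSeries ^ 3 * X ^ 2 + catalanSeries * X + 1
      = (catalanSeries ^ 2 * X + 1) * (catalanSeries * X) + 1 := by ring
    _ = catalanSeries * (catalanSeries * X) + 1 := by rw [h]
    _ = catalanSeries ^ 2 * X + 1 := by ring
    _ = catalanSeries := h

theorem catalan_add_two_eq_coeff_catalanSeries_pow_three_add (j : ℕ) :
    catalan (j + 2) = coeff j (catalanSeries ^ 3) + catalan (j + 1) := by
  conv_lhs => rw [← catalanSeries_coeff, ← catalanSeries_pow_three_mul_X_sq_add]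
  simp [coeff_mul_X_pow, coeff_succ_mul_X]

theorem Tz_eq_coeff_catalanSeries_pow {m n : ℕ} (hm : 0 < m) (hn : 0 < n) :
    Tz n m = coeff (n - m) (catalanSeries ^ (m + 2)) := by
  rcases Nat.lt_or_ge m 2 with hm1 | hm2
  · obtain rfl : m = 1 := by omega
    obtain ⟨j, rfl⟩ : ∃ j, n = j + 1 := ⟨n - 1, by omega⟩
    rw [Tz, if_pos rfl, catalan_add_two_eq_coeff_catalanSeries_pow_three_add]
    push_cast
    ring
  · rw [Tz, if_neg (by omega), Tcount_eq_coeff_catalanSeries_pow hm2]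

theorem PowerSeries.catalanSeries_pow_succ (j : ℕ) :
    catalanSeries ^ (j + 1) = catalanSeries ^ j + catalanSeries ^ (j + 2) * X :=
  calc catalanSeries ^ (j + 1) = catalanSeries ^ j * (catalanSeries ^ 2 * X + 1) := by
        rw [catalanSeries_sq_mul_X_add_one, pow_succ]
    _ = catalanSeries ^ j + catalanSeries ^ (j + 2) * X := by ring

theorem PowerSeries.coeff_succ_catalanSeries_pow_succ (j d : ℕ) :
    coeff (d + 1) (catalanSeries ^ (j + 1)) =
      coeff (d + 1) (catalanSeries ^ j) + coeff d (catalanSeries ^ (j + 2)) := by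
  rw [catalanSeries_pow_succ, map_add, coeff_succ_mul_X]

/-- For every m ≥ 3 and n > m, T(n,m) = T(n,m−1) − T(n−1,m−2). -/
theorem stmt_13 (m n : ℕ) (hm : 3 ≤ m) (hn : m < n) :
    Tz n m = Tz n (m - 1) - Tz (n - 1) (m - 2) := by
  obtain ⟨d, rfl⟩ : ∃ d, n = m + d := ⟨n - m, by omega⟩
  rw [Tz_eq_coeff_catalanSeries_pow (by omega) (by omega),
    Tz_eq_coeff_catalanSeries_pow (by omega) (by omega),
    Tz_eq_coeff_catalanSeries_pow (by omega) (by omega),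
    show m + d - m = d by omega, show m + d - (m - 1) = d + 1 by omega,
    show m + d - 1 - (m - 2) = d + 1 by omega, show m - 1 + 2 = m + 1 by omega,
    show m - 2 + 2 = m by omega, coeff_succ_catalanSeries_pow_succ]
  push_cast
  ring
end

section
/- Define the generating vectors v^{(m)} ∈ ℤ^{⌊m⌋} (where ⌊m⌋ := ⌊(m−1)/2⌋ + 2) by v^{(2)} = (1, −2), v^{(3)} = (1, −3, 1), and for m ≥ 3 by v^{(m+1)} = v^{(m)}_↰ − v^{(m−1)}_↓, where v_↰ appends a trailing zero to v when ⌊m+1⌋ > ⌊m⌋ and leaves v unchanged when ⌊m+1⌋ = ⌊m⌋, and v_↓ prepends a leading zero to v. Then for every m ≥ 2, v^{(m+1)} = 𝒯_{⌊m+1⌋} · v^{(m)}_↰, where 𝒯_k is the k×k lower-triangular matrix with entries (𝒯_k)_{ij} = 1 if i = j, (𝒯_k)_{ij} = −C_{i−j−1} if i > j, and 0 if i < j. -/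
/-- ⌊m⌋ := ⌊(m−1)/2⌋ + 2, the length of the generating vector of T(n,m). -/
def fl (m : ℕ) : ℕ := (m - 1) / 2 + 2

/-- The generating vectors v⁽ᵐ⁾, encoded as functions ℕ → ℤ supported on
indices 0, …, ⌊m⌋−1 (coordinates beyond ⌊m⌋ are 0, so the append-a-trailing-zero
operation ↰ is the identity in this encoding, and prepending a leading zero ↓ is
shifting the index by one):
v⁽²⁾ = (1, −2), v⁽³⁾ = (1, −3, 1), and v⁽ᵐ⁺¹⁾ = v⁽ᵐ⁾_↰ − v⁽ᵐ⁻¹⁾_↓ for m ≥ 3. -/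
def genVec : ℕ → ℕ → ℤ
  | 0, _ => 0
  | 1, _ => 0
  | 2, i => if i = 0 then 1 else if i = 1 then -2 else 0
  | 3, i => if i = 0 then 1 else if i = 1 then -3 else if i = 2 then 1 else 0
  | m + 4, i => genVec (m + 3) i - (if i = 0 then 0 else genVec (m + 2) (i - 1))


/-- Pascal's rule, safe for natural subtraction. -/
lemma pascal_sub (a j : ℕ) :
    (a + 1 - j).choose (j + 1) = (a - j).choose (j + 1) + (a - j).choose j := by
  rcases le_or_gt j a with h | h
  · have h1 : a + 1 - j = (a - j) + 1 := by omega
    rw [h1, Nat.choose_succ_succ']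
    omega
  · have h1 : a + 1 - j = 0 := by omega
    have h2 : a - j = 0 := by omega
    obtain ⟨t, rfl⟩ : ∃ t, j = t + 1 := ⟨j - 1, by omega⟩
    simp [h1, h2]

/-- The convolution of the alternating binomial row with Catalan numbers. -/
def Fc (n k : ℕ) : ℤ :=
  ∑ j ∈ Finset.range (k + 1),
    (-1 : ℤ) ^ j * ((n - j).choose j : ℤ) * (catalan (k - j) : ℤ)

lemma Fc_rec (n k : ℕ) : Fc (n + 2) (k + 1) = Fc (n + 1) (k + 1) - Fc n k := by
  unfold Fc
  rw [Finset.sum_range_succ' (fun j => (-1 : ℤ) ^ j * ((n + 2 - j).choose j : ℤ) *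
        (catalan (k + 1 - j) : ℤ)) (k + 1),
      Finset.sum_range_succ' (fun j => (-1 : ℤ) ^ j * ((n + 1 - j).choose j : ℤ) *
        (catalan (k + 1 - j) : ℤ)) (k + 1)]
  have key : ∀ j ∈ Finset.range (k + 1),
      (-1 : ℤ) ^ (j + 1) * ((n + 2 - (j + 1)).choose (j + 1) : ℤ) *
          (catalan (k + 1 - (j + 1)) : ℤ) =
      (-1 : ℤ) ^ (j + 1) * ((n + 1 - (j + 1)).choose (j + 1) : ℤ) *
          (catalan (k + 1 - (j + 1)) : ℤ) -
        (-1 : ℤ) ^ j * ((n - j).choose j : ℤ) * (catalan (k - j) : ℤ) := by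
    intro j hj
    have e1 : n + 2 - (j + 1) = n + 1 - j := by omega
    have e2 : n + 1 - (j + 1) = n - j := by omega
    have e3 : k + 1 - (j + 1) = k - j := by omega
    rw [e1, e2, e3, pascal_sub n j]
    push_cast
    ring
  rw [Finset.sum_congr rfl key, Finset.sum_sub_distrib]
  simp only [Nat.choose_zero_right, Nat.cast_one, pow_zero]
  ring

lemma Fc_row0 (k : ℕ) : Fc 0 k = (catalan k : ℤ) := by
  unfold Fc
  rw [Finset.sum_range_succ' (fun j => (-1 : ℤ) ^ j * ((0 - j).choose j : ℤ) *
        (catalan (k - j) : ℤ)) k]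
  simp

lemma Fc_row1 (k : ℕ) : Fc 1 k = (catalan k : ℤ) := by
  unfold Fc
  rw [Finset.sum_range_succ' (fun j => (-1 : ℤ) ^ j * ((1 - j).choose j : ℤ) *
        (catalan (k - j) : ℤ)) k]
  simp
lemma catalan_choose (k : ℕ) :
    catalan (k + 1) + (2 * (k + 1)).choose k = (2 * (k + 1)).choose (k + 1) := by
  apply Nat.eq_of_mul_eq_mul_left (show 0 < k + 2 by omega)
  have h1 : (k + 2) * catalan (k + 1) = (2 * (k + 1)).choose (k + 1) := by
    have := succ_mul_catalan_eq_centralBinom (k + 1)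
    rwa [Nat.centralBinom_eq_two_mul_choose] at this
  have h2 : (2 * (k + 1)).choose (k + 1) * (k + 1) = (2 * (k + 1)).choose k * (k + 2) := by
    have := Nat.choose_succ_right_eq (2 * (k + 1)) k
    have e : 2 * (k + 1) - k = k + 2 := by omega
    rw [e] at this
    exact this
  nlinarith [h1, h2]

lemma catalan_choose' (k : ℕ) :
    catalan (k + 2) + (2 * k + 3).choose k = (2 * k + 3).choose (k + 1) := by
  have h0 := catalan_choose (k + 1)
  have e1 : 2 * (k + 1 + 1) = (2 * k + 3) + 1 := by omega
  rw [e1, Nat.choose_succ_succ' (2 * k + 3) k,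
      Nat.choose_succ_succ' (2 * k + 3) (k + 1)] at h0
  have hsymm : (2 * k + 3).choose (k + 1 + 1) = (2 * k + 3).choose (k + 1) := by
    have h := Nat.choose_symm (show k + 1 + 1 ≤ 2 * k + 3 by omega)
    have e : 2 * k + 3 - (k + 1 + 1) = k + 1 := by omega
    rw [e] at h
    exact h.symm
  have h0' : catalan (k + 2) + ((2 * k + 3).choose k + (2 * k + 3).choose (k + 1))
      = (2 * k + 3).choose (k + 1) + (2 * k + 3).choose (k + 1 + 1) := h0
  omega

/-- The closed-form value of `Fc`. -/
def Rc (n k : ℕ) : ℤ :=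
  if k < n then (-1 : ℤ) ^ k * ((n - 1 - k).choose k : ℤ)
  else if k = n then 1
  else ((2 * k - n).choose (k - n) : ℤ) - ((2 * k - n).choose (k - n - 1) : ℤ)

lemma Rc_lt {n k : ℕ} (h : k < n) :
    Rc n k = (-1 : ℤ) ^ k * ((n - 1 - k).choose k : ℤ) := by simp [Rc, h]

lemma Rc_diag (n : ℕ) : Rc n n = 1 := by simp [Rc]

lemma Rc_gt {n k : ℕ} (h : n < k) :
    Rc n k = ((2 * k - n).choose (k - n) : ℤ) - ((2 * k - n).choose (k - n - 1) : ℤ) := by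
  have h1 : ¬ k < n := by omega
  have h2 : k ≠ n := by omega
  simp [Rc, h1, h2]

lemma Rc_rec (n k : ℕ) : Rc (n + 1) (k + 1) - Rc n k = Rc (n + 2) (k + 1) := by
  rcases lt_trichotomy k n with h | rfl | h
  · obtain ⟨d, rfl⟩ : ∃ d, n = k + 1 + d := ⟨n - k - 1, by omega⟩
    rw [Rc_lt (show k + 1 < k + 1 + d + 1 by omega),
        Rc_lt (show k < k + 1 + d by omega),
        Rc_lt (show k + 1 < k + 1 + d + 2 by omega)]
    have e1 : k + 1 + d + 1 - 1 - (k + 1) = d := by omega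
    have e2 : k + 1 + d - 1 - k = d := by omega
    have e3 : k + 1 + d + 2 - 1 - (k + 1) = d + 1 := by omega
    rw [e1, e2, e3, Nat.choose_succ_succ' d k]
    push_cast
    ring
  · rw [Rc_diag, Rc_diag, Rc_lt (show k + 1 < k + 2 by omega)]
    have e1 : k + 2 - 1 - (k + 1) = 0 := by omega
    rw [e1, Nat.choose_zero_succ]
    simp
  · obtain ⟨d, rfl⟩ : ∃ d, k = n + 1 + d := ⟨k - n - 1, by omega⟩
    cases d with
    | zero =>
      rw [Rc_gt (show n + 1 < n + 1 + 0 + 1 by omega),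
          Rc_gt (show n < n + 1 + 0 by omega),
          show n + 1 + 0 + 1 = n + 2 from by omega, Rc_diag]
      have e1 : 2 * (n + 2) - (n + 1) = n + 3 := by omega
      have e2 : n + 2 - (n + 1) = 1 := by omega
      have e3 : n + 2 - (n + 1) - 1 = 0 := by omega
      have e4 : 2 * (n + 1 + 0) - n = n + 2 := by omega
      have e5 : n + 1 + 0 - n = 1 := by omega
      have e6 : n + 1 + 0 - n - 1 = 0 := by omega
      rw [e1, e3, e2, e4, e6, e5]
      simp [Nat.choose_one_right]
    | succ e =>
      rw [Rc_gt (show n + 1 < n + 1 + (e + 1) + 1 by omega),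
          Rc_gt (show n < n + 1 + (e + 1) by omega),
          Rc_gt (show n + 2 < n + 1 + (e + 1) + 1 by omega)]
      have e1 : 2 * (n + 1 + (e + 1) + 1) - (n + 1) = n + 2 * e + 5 := by omega
      have e2 : n + 1 + (e + 1) + 1 - (n + 1) = e + 2 := by omega
      have e3 : n + 1 + (e + 1) + 1 - (n + 1) - 1 = e + 1 := by omega
      have e4 : 2 * (n + 1 + (e + 1)) - n = n + 2 * e + 4 := by omega
      have e5 : n + 1 + (e + 1) - n = e + 2 := by omega
      have e6 : n + 1 + (e + 1) - n - 1 = e + 1 := by omega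
      have e7 : 2 * (n + 1 + (e + 1) + 1) - (n + 2) = n + 2 * e + 4 := by omega
      have e8 : n + 1 + (e + 1) + 1 - (n + 2) = e + 1 := by omega
      have e9 : n + 1 + (e + 1) + 1 - (n + 2) - 1 = e := by omega
      rw [e1, e3, e2, e4, e6, e5, e7, e9, e8,
          Nat.choose_succ_succ' (n + 2 * e + 4) (e + 1),
          Nat.choose_succ_succ' (n + 2 * e + 4) e]
      push_cast
      ring

lemma Fc_eq_Rc : ∀ n k, Fc n k = Rc n k := by
  intro n
  induction n using Nat.twoStepInduction with
  | zero =>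
    intro k
    rw [Fc_row0]
    cases k with
    | zero => simp [Rc_diag]
    | succ t =>
      rw [Rc_gt (show 0 < t + 1 by omega)]
      have e1 : 2 * (t + 1) - 0 = 2 * (t + 1) := by omega
      have e2 : t + 1 - 0 = t + 1 := by omega
      have e3 : t + 1 - 0 - 1 = t := by omega
      rw [e1, e3, e2]
      have := catalan_choose t
      omega
  | one =>
    intro k
    rw [Fc_row1]
    match k with
    | 0 => rw [Rc_lt (show 0 < 1 by omega)]; simp
    | 1 => rw [Rc_diag]; simp [catalan_one]
    | (t + 2) =>
      rw [Rc_gt (show 1 < t + 2 by omega)]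
      have e1 : 2 * (t + 2) - 1 = 2 * t + 3 := by omega
      have e2 : t + 2 - 1 = t + 1 := by omega
      have e3 : t + 2 - 1 - 1 = t := by omega
      rw [e1, e3, e2]
      have := catalan_choose' t
      omega
  | more n ih1 ih2 =>
    intro k
    cases k with
    | zero =>
      rw [Rc_lt (show 0 < n + 2 by omega)]
      simp [Fc]
    | succ k =>
      rw [Fc_rec, ih2 (k + 1), ih1 k, Rc_rec]

lemma genVec_closed : ∀ m i, genVec (m + 2) i = (-1 : ℤ) ^ i * ((m + 3 - i).choose i : ℤ) := by
  intro m
  induction m using Nat.twoStepInduction with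
  | zero =>
    intro i
    match i with
    | 0 => simp [genVec]
    | 1 => simp [genVec]
    | (j + 2) =>
      have h : (1 - j).choose (j + 2) = 0 :=
        Nat.choose_eq_zero_of_lt (by omega)
      simp [genVec, h]
  | one =>
    intro i
    match i with
    | 0 => simp [genVec]
    | 1 => simp [genVec]
    | 2 => simp [genVec]
    | (j + 3) =>
      have h : (1 - j).choose (j + 3) = 0 :=
        Nat.choose_eq_zero_of_lt (by omega)
      simp [genVec, h]
  | more m ih1 ih2 =>
    intro i
    show genVec (m + 4) i = _
    rw [show genVec (m + 4) i
        = genVec (m + 3) i - (if i = 0 then 0 else genVec (m + 2) (i - 1)) from rfl]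
    cases i with
    | zero =>
      rw [ih2 0]
      simp
    | succ j =>
      have e0 : j + 1 - 1 = j := by omega
      rw [if_neg (by omega : ¬ j + 1 = 0), e0, ih2 (j + 1), ih1 j]
      have e1 : m + 1 + 3 - (j + 1) = m + 3 - j := by omega
      have e2 : m + 2 + 3 - (j + 1) = m + 3 + 1 - j := by omega
      rw [e1, e2, pascal_sub (m + 3) j]
      push_cast
      ring

/-- For every m ≥ 2, v⁽ᵐ⁺¹⁾ = 𝒯_{⌊m+1⌋} · v⁽ᵐ⁾_↰, where 𝒯_k is the k×k
lower-triangular matrix with 1 on the diagonal and entries −C_{i−j−1} below it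
(0-based indices i, j < ⌊m+1⌋ below; v⁽ᵐ⁾_↰ agrees with v⁽ᵐ⁾ as a function ℕ → ℤ). -/
theorem stmt_15 (m : ℕ) (hm : 2 ≤ m) :
    ∀ i < fl (m + 1),
      genVec (m + 1) i =
        ∑ j ∈ Finset.range (fl (m + 1)),
          (if i = j then (1 : ℤ) else if j < i then -(catalan (i - j - 1) : ℤ) else 0) *
            genVec m j := by
  obtain ⟨M, rfl⟩ : ∃ M, m = M + 2 := ⟨m - 2, by omega⟩
  intro i hi
  have hfl : fl (M + 2 + 1) = (M + 2) / 2 + 2 := by simp [fl]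
  -- restrict the sum to range (i+1)
  have hzero : ∀ j ∈ Finset.range (fl (M + 2 + 1)), j ∉ Finset.range (i + 1) →
      (if i = j then (1 : ℤ) else if j < i then -(catalan (i - j - 1) : ℤ) else 0) *
        genVec (M + 2) j = 0 := by
    intro j hj hj'
    have : i < j := by
      simp only [Finset.mem_range] at hj'
      omega
    rw [if_neg (by omega), if_neg (by omega)]
    ring
  have hsub : Finset.range (i + 1) ⊆ Finset.range (fl (M + 2 + 1)) :=
    Finset.range_subset_range.mpr (by omega)
  rw [← Finset.sum_subset hsub hzero, Finset.sum_range_succ, if_pos rfl, one_mul]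
  cases i with
  | zero =>
    simp
    rw [show (M + 2 : ℕ) + 1 = (M + 1) + 2 from rfl, genVec_closed (M + 1) 0,
        genVec_closed M 0]
    simp
  | succ k =>
    have hsum : ∑ j ∈ Finset.range (k + 1),
        (if k + 1 = j then (1 : ℤ) else if j < k + 1 then -(catalan (k + 1 - j - 1) : ℤ) else 0) *
          genVec (M + 2) j = -Fc (M + 3) k := by
      rw [Fc, ← Finset.sum_neg_distrib]
      apply Finset.sum_congr rfl
      intro j hj
      simp only [Finset.mem_range] at hj
      rw [if_neg (by omega), if_pos (by omega), genVec_closed M j]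
      have e1 : k + 1 - j - 1 = k - j := by omega
      have e2 : M + 3 - j = M + 3 - j := rfl
      rw [e1]
      push_cast
      ring
    rw [hsum]
    have hk : k < M + 3 := by omega
    have hF : Fc (M + 3) k = (-1 : ℤ) ^ k * ((M + 2 - k).choose k : ℤ) := by
      rw [Fc_eq_Rc, Rc_lt hk]
      have e : M + 3 - 1 - k = M + 2 - k := by omega
      rw [e]
    rw [hF, show (M + 2 : ℕ) + 1 = (M + 1) + 2 from rfl, genVec_closed (M + 1) (k + 1),
        genVec_closed M (k + 1)]
    have e1 : M + 1 + 3 - (k + 1) = M + 2 + 1 - k := by omega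
    have e2 : M + 3 - (k + 1) = M + 2 - k := by omega
    rw [e1, e2, pascal_sub (M + 2) k]
    push_cast
    ring
end

section
/- For every m ≥ 2, setting ⌊m⌋ := ⌊(m−1)/2⌋ + 2, there exist real constants c_1, c_2 > 0 such that for all integers n ≥ m, c_1·C_{n−⌊m⌋+2} ≤ T(n,m) ≤ c_2·C_{n−⌊m⌋+2}, where T(n,m) denotes the sum ∑ C_{r_1}·…·C_{r_m} over all m-tuples (r_1,…,r_m) of nonnegative integers with r_1 ≥ 1, r_m ≥ 1 and r_1+⋯+r_m = n−m+2. -/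
open Finset

theorem catalan_pos (n : ℕ) : 0 < catalan n :=
  Nat.pos_of_mul_pos_left ((succ_mul_catalan_eq_centralBinom n).symm ▸ n.centralBinom_pos)

theorem add_two_mul_catalan_succ (n : ℕ) :
    (n + 2) * catalan (n + 1) = 2 * (2 * n + 1) * catalan n := by
  refine Nat.eq_of_mul_eq_mul_left n.succ_pos ?_
  calc (n + 1) * ((n + 2) * catalan (n + 1)) = (n + 1) * (n + 1).centralBinom := by
        rw [← succ_mul_catalan_eq_centralBinom]
    _ = 2 * (2 * n + 1) * n.centralBinom := Nat.succ_mul_centralBinom_succ n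
    _ = (n + 1) * (2 * (2 * n + 1) * catalan n) := by
        rw [← succ_mul_catalan_eq_centralBinom]; ring

theorem catalan_succ_le_four_mul (n : ℕ) : catalan (n + 1) ≤ 4 * catalan n := by
  have := add_two_mul_catalan_succ n
  nlinarith

theorem catalan_add_le_four_pow_mul (n j : ℕ) : catalan (n + j) ≤ 4 ^ j * catalan n := by
  induction j with
  | zero => simp
  | succ j ih =>
    calc catalan (n + j + 1) ≤ 4 * catalan (n + j) := catalan_succ_le_four_mul _
      _ ≤ 4 * (4 ^ j * catalan n) := by gcongr
      _ = 4 ^ (j + 1) * catalan n := by ring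

theorem catalan_mono : Monotone catalan := by
  refine monotone_nat_of_le_succ fun n => ?_
  rw [catalan_succ']
  calc catalan n = catalan n * catalan 0 := by simp
    _ ≤ ∑ ij ∈ antidiagonal n, catalan ij.1 * catalan ij.2 :=
      single_le_sum (f := fun ij => catalan ij.1 * catalan ij.2) (fun _ _ => Nat.zero_le _)
        (a := (n, 0)) (mem_antidiagonal.mpr (add_zero n))

theorem catalan_le_four_pow_mul_of_le {a b j : ℕ} (h : a ≤ b + j) :
    catalan a ≤ 4 ^ j * catalan b :=
  (catalan_mono h).trans (catalan_add_le_four_pow_mul b j)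

theorem Finset.Nat.sum_antidiagonalTuple_succ_prod {R : Type*} [CommSemiring R] (f : ℕ → R)
    (k n : ℕ) :
    ∑ r ∈ antidiagonalTuple (k + 1) n, ∏ i, f (r i) =
      ∑ p ∈ antidiagonal n, f p.1 * ∑ r ∈ antidiagonalTuple k p.2, ∏ i, f (r i) := by
  simp only [antidiagonalTuple, Multiset.Nat.antidiagonalTuple, List.Nat.antidiagonalTuple,
    sum_mk, Multiset.map_coe, Multiset.sum_coe, List.flatMap, List.map_flatten,
    List.sum_flatten, List.map_map, Function.comp_def, Fin.prod_univ_succ, Fin.cons_zero,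
    Fin.cons_succ, List.sum_map_mul_left]
  rfl

theorem sum_antidiagonal_catalan_mul_catalan_add_le (m N : ℕ) :
    ∑ p ∈ antidiagonal N, catalan p.1 * catalan (p.2 + m) ≤ catalan (N + m + 1) := by
  rw [catalan_succ', Nat.sum_antidiagonal_eq_sum_range_succ_mk,
    Nat.sum_antidiagonal_eq_sum_range_succ_mk]
  calc ∑ k ∈ range (N + 1), catalan k * catalan (N - k + m)
      = ∑ k ∈ range (N + 1), catalan k * catalan (N + m - k) := by
        refine sum_congr rfl fun k hk => ?_
        rw [mem_range] at hk
        rw [Nat.sub_add_comm (by omega)]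
    _ ≤ ∑ k ∈ range (N + m + 1), catalan k * catalan (N + m - k) :=
        sum_le_sum_of_subset (range_subset_range.mpr (by omega))

theorem sum_antidiagonalTuple_prod_catalan_le (m N : ℕ) :
    ∑ r ∈ Nat.antidiagonalTuple (m + 1) N, ∏ i, catalan (r i) ≤ catalan (N + m) := by
  induction m generalizing N with
  | zero => simp [Nat.antidiagonalTuple_one]
  | succ m ih =>
    rw [Nat.sum_antidiagonalTuple_succ_prod]
    calc _ ≤ ∑ p ∈ antidiagonal N, catalan p.1 * catalan (p.2 + m) :=
          sum_le_sum fun p _ => Nat.mul_le_mul_left _ (ih p.2)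
      _ ≤ catalan (N + (m + 1)) := sum_antidiagonal_catalan_mul_catalan_add_le m N

theorem Tcount_le_catalan (n : ℕ) {m : ℕ} (hm : m ≠ 0) :
    Tcount n m ≤ catalan (n - m + 2 + (m - 1)) := by
  obtain ⟨m, rfl⟩ := Nat.exists_eq_add_one_of_ne_zero hm
  exact (sum_le_sum_of_subset (filter_subset _ _)).trans
    (sum_antidiagonalTuple_prod_catalan_le m _)

theorem catalan_le_Tcount (n : ℕ) {m : ℕ} (hm : 2 ≤ m) : catalan (n - m + 1) ≤ Tcount n m := by
  set N := n - m + 2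
  let first : Fin m := ⟨0, by omega⟩
  let last : Fin m := ⟨m - 1, by omega⟩
  have hne : first ≠ last := Fin.ne_of_val_ne (by simp [first, last]; omega)
  let r : Fin m → ℕ := Pi.single first 1 + Pi.single last (N - 1)
  have hr_last : r last = n - m + 1 := by simp [r, hne.symm, N]
  have hr_mem : r ∈ (Nat.antidiagonalTuple m N).filter
      (fun r => ∀ i : Fin m, ((i : ℕ) = 0 ∨ (i : ℕ) = m - 1) → 1 ≤ r i) := by
    refine mem_filter.mpr ⟨Nat.mem_antidiagonalTuple.mpr ?_, ?_⟩
    · simp only [r, Pi.add_apply, sum_add_distrib, sum_pi_single', mem_univ, if_true]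
      omega
    · rintro i (hi | hi)
      · simp [show i = first from Fin.ext hi, r, hne]
      · rw [show i = last from Fin.ext hi, hr_last]
        omega
  calc catalan (n - m + 1) = catalan (r last) := by rw [hr_last]
    _ ≤ ∏ i, catalan (r i) :=
      single_le_prod' (f := fun i => catalan (r i)) (fun i _ => catalan_pos (r i)) (mem_univ _)
    _ ≤ Tcount n m :=
      single_le_sum (f := fun r : Fin m → ℕ => ∏ i, catalan (r i)) (fun _ _ => Nat.zero_le _)
        hr_mem

/-- For every m ≥ 2, with ⌊m⌋ := ⌊(m−1)/2⌋ + 2, there are constants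
c₁, c₂ > 0 with c₁·C_{n−⌊m⌋+2} ≤ T(n,m) ≤ c₂·C_{n−⌊m⌋+2} for all n ≥ m. -/
theorem stmt_16 (m : ℕ) (hm : 2 ≤ m) :
    ∃ c₁ c₂ : ℝ, 0 < c₁ ∧ 0 < c₂ ∧ ∀ n : ℕ, m ≤ n →
      c₁ * (catalan (n - ((m - 1) / 2 + 2) + 2) : ℝ) ≤ (Tcount n m : ℝ) ∧
        (Tcount n m : ℝ) ≤ c₂ * (catalan (n - ((m - 1) / 2 + 2) + 2) : ℝ) := by
  refine ⟨(4 ^ m)⁻¹, 4 ^ m, by positivity, by positivity, fun n _ => ?_⟩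
  have lower : catalan (n - ((m - 1) / 2 + 2) + 2) ≤ 4 ^ m * Tcount n m :=
    (catalan_le_four_pow_mul_of_le (by omega)).trans
      (Nat.mul_le_mul_left _ (catalan_le_Tcount n hm))
  have upper : Tcount n m ≤ 4 ^ m * catalan (n - ((m - 1) / 2 + 2) + 2) :=
    (Tcount_le_catalan n (by omega)).trans (catalan_le_four_pow_mul_of_le (by omega))
  constructor
  · rw [inv_mul_le_iff₀ (by positivity)]
    exact_mod_cast lower
  · exact_mod_cast upper
end
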